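/- Under the assumptions that M has no duplicate atoms and that an assignment satisfies positive compatibility, negative compatibility, and SAT-based completeness (⋀ᵢ ⋁ⱼ (b⁺ᵢⱼ ∨ b⁻ᵢⱼ)) with respect to a substitution σ, it holds that for all i, j: Σ⁺ᵢⱼ ⊆ σ implies b⁺ᵢⱼ, and Σ⁻ᵢⱼ ⊆ σ implies b⁻ᵢⱼ. -/

import Mathlib

/-- First-order terms over variables `V`. -/
inductive Trm (V : Type) : Type
  | var : V → Trm V
  | fn : ℕ → Trm V
  | app : Trm V → Trm V → Trm V
deriving DecidableEq

/-- Applying a (total) substitution to a term. -/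
def Trm.subst {V : Type} (σ : V → Trm V) : Trm V → Trm V
  | .var x => σ x
  | .fn f => .fn f
  | .app t u => .app (t.subst σ) (u.subst σ)

/-- A first-order literal: a polarity, a predicate symbol and an argument term. -/
structure Lit (V : Type) where
  pos : Bool
  pred : ℕ
  arg : Trm V
deriving DecidableEq

/-- The complement of a literal. -/
def Lit.neg {V : Type} (l : Lit V) : Lit V := { l with pos := !l.pos }

/-- Applying a substitution to a literal. -/
def Lit.subst {V : Type} (σ : V → Trm V) (l : Lit V) : Lit V :=
  { l with arg := l.arg.subst σ }

/-- A clause is a multiset of literals. -/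
abbrev Clause (V : Type) := Multiset (Lit V)

/-- Applying a substitution to a clause. -/
def Clause.subst {V : Type} (σ : V → Trm V) (C : Clause V) : Clause V :=
  C.map (Lit.subst σ)

/-- `S` subsumes `M`: some substitution maps `S` to a sub-multiset of `M`. -/
def Subsumes {V : Type} (S M : Clause V) : Prop :=
  ∃ σ : V → Trm V, Clause.subst σ S ≤ M

/-- `S` and `M` are side and main premises of subsumption resolution:
there are `σ`, a nonempty `S' ⊆ S` and `m' ∈ M` with `σ(S') = {¬m'}` and
`σ(S \ S') ⊆ M \ {m'}`. -/
def SubRes {V : Type} [DecidableEq V] (S M : Clause V) : Prop :=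
  ∃ (σ : V → Trm V) (S' : Clause V) (m' : Lit V),
    S' ≤ S ∧ S' ≠ 0 ∧ m' ∈ M ∧
    (∀ l ∈ S', Lit.subst σ l = m'.neg) ∧
    (∀ l ∈ S - S', Lit.subst σ l ∈ M.erase m')

/-- Partial substitutions. -/
abbrev PSub (V : Type) := V → Option (Trm V)

/-- Partial application of a partial substitution to a term. -/
def Trm.psubst {V : Type} (θ : PSub V) : Trm V → Option (Trm V)
  | .var x => θ x
  | .fn f => some (.fn f)
  | .app t u => (t.psubst θ).bind fun t' => (u.psubst θ).map fun u' => .app t' u'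

/-- Partial application of a partial substitution to a literal. -/
def Lit.psubst {V : Type} (θ : PSub V) (l : Lit V) : Option (Lit V) :=
  (l.arg.psubst θ).map fun t => { l with arg := t }

/-- `θ ⊆ σ`: the total substitution `σ` extends the partial substitution `θ`. -/
def PSub.le {V : Type} (θ : PSub V) (σ : V → Trm V) : Prop :=
  ∀ x t, θ x = some t → σ x = t

/-- The clause with literals `s 0, …, s (k-1)`. -/
def clauseOfFn {V : Type} {k : ℕ} (s : Fin k → Lit V) : Clause V :=
  (List.ofFn s : List (Lit V))

/-- The indexed clause `m` has no duplicate literals. -/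
def NoDupIdx {V : Type} {n : ℕ} (m : Fin n → Lit V) : Prop :=
  ∀ j j' : Fin n, m j = m j' → j = j'

/-- The indexed clause `m` has no duplicate atoms: no two (distinct) literals are
equal or complementary. -/
def NoDupAtomsIdx {V : Type} {n : ℕ} (m : Fin n → Lit V) : Prop :=
  (∀ j j' : Fin n, m j = m j' → j = j') ∧ (∀ j j' : Fin n, m j ≠ (m j').neg)

/-- `Sp` is the family of positive matchers `Σ⁺ᵢⱼ`: `Sp i j = some θ` exactly when a
substitution matching `sᵢ` to `mⱼ` exists, in which case `θ` is such a (partial)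
matcher and every total match is an extension of it. -/
def IsMatcherFamilyPos {V : Type} {k n : ℕ} (s : Fin k → Lit V) (m : Fin n → Lit V)
    (Sp : Fin k → Fin n → Option (PSub V)) : Prop :=
  (∀ i j θ, Sp i j = some θ → Lit.psubst θ (s i) = some (m j)) ∧
  (∀ i j (σ : V → Trm V), Lit.subst σ (s i) = m j → ∃ θ, Sp i j = some θ ∧ PSub.le θ σ)

/-- `Sn` is the family of negative matchers `Σ⁻ᵢⱼ` (matching `sᵢ` to `¬mⱼ`). -/
def IsMatcherFamilyNeg {V : Type} {k n : ℕ} (s : Fin k → Lit V) (m : Fin n → Lit V)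
    (Sn : Fin k → Fin n → Option (PSub V)) : Prop :=
  (∀ i j θ, Sn i j = some θ → Lit.psubst θ (s i) = some ((m j).neg)) ∧
  (∀ i j (σ : V → Trm V), Lit.subst σ (s i) = (m j).neg → ∃ θ, Sn i j = some θ ∧ PSub.le θ σ)

/-- The (predicate, polarity) header of a literal. -/
def Lit.header {V : Type} (l : Lit V) : ℕ × Bool := (l.pred, l.pos)

/-! The assignment determines the instance `σ(sᵢ)`: completeness selects some `j'` with
`b⁺ᵢⱼ'` or `b⁻ᵢⱼ'`, and compatibility turns this into `σ(sᵢ) = mⱼ'` or `σ(sᵢ) = ¬mⱼ'`.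
If also `Σ±ᵢⱼ ⊆ σ`, then `σ(sᵢ) = ±mⱼ`, and since the literals of `M` are pairwise distinct
and non-complementary, the polarity and the index `j` agree with the selected ones. -/

theorem Trm.subst_eq_of_psubst_eq_some {V : Type} {θ : PSub V} {σ : V → Trm V}
    (hθ : PSub.le θ σ) : ∀ {t t' : Trm V}, Trm.psubst θ t = some t' → Trm.subst σ t = t'
  | .var x, t', ht => hθ x t' ht
  | .fn f, t', ht => by simpa [Trm.psubst, Trm.subst] using ht
  | .app a b, t', ht => by
    simp only [Trm.psubst, Option.bind_eq_some_iff, Option.map_eq_some_iff] at ht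
    obtain ⟨a', ha, b', hb, rfl⟩ := ht
    rw [Trm.subst, subst_eq_of_psubst_eq_some hθ ha, subst_eq_of_psubst_eq_some hθ hb]

theorem Lit.subst_eq_of_psubst_eq_some {V : Type} {θ : PSub V} {σ : V → Trm V}
    (hθ : PSub.le θ σ) {l l' : Lit V} (hl : Lit.psubst θ l = some l') : Lit.subst σ l = l' := by
  simp only [Lit.psubst, Option.map_eq_some_iff] at hl
  obtain ⟨t, ht, rfl⟩ := hl
  rw [Lit.subst, Trm.subst_eq_of_psubst_eq_some hθ ht]

theorem Lit.neg_injective {V : Type} : Function.Injective (Lit.neg : Lit V → Lit V) := by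
  rintro ⟨p, q, t⟩ ⟨p', q', t'⟩ h
  simp only [Lit.neg, Lit.mk.injEq, Bool.not_inj_iff] at h ⊢
  exact h

section Matchers

variable {V : Type} {k n : ℕ} {s : Fin k → Lit V} {m : Fin n → Lit V} {σ : V → Trm V}
  {i : Fin k} {j : Fin n} {θ : PSub V}

theorem IsMatcherFamilyPos.subst_eq {Sp : Fin k → Fin n → Option (PSub V)}
    (hSp : IsMatcherFamilyPos s m Sp) (hθ : Sp i j = some θ) (hle : PSub.le θ σ) :
    Lit.subst σ (s i) = m j :=
  Lit.subst_eq_of_psubst_eq_some hle (hSp.1 i j θ hθ)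

theorem IsMatcherFamilyNeg.subst_eq {Sn : Fin k → Fin n → Option (PSub V)}
    (hSn : IsMatcherFamilyNeg s m Sn) (hθ : Sn i j = some θ) (hle : PSub.le θ σ) :
    Lit.subst σ (s i) = (m j).neg :=
  Lit.subst_eq_of_psubst_eq_some hle (hSn.1 i j θ hθ)

theorem exists_selected_subst_eq {Sp Sn : Fin k → Fin n → Option (PSub V)}
    (hSp : IsMatcherFamilyPos s m Sp) (hSn : IsMatcherFamilyNeg s m Sn)
    {bp bn : Fin k → Fin n → Bool}
    (hcp : ∀ i j, bp i j = true → ∃ θ, Sp i j = some θ ∧ PSub.le θ σ)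
    (hcn : ∀ i j, bn i j = true → ∃ θ, Sn i j = some θ ∧ PSub.le θ σ)
    (hcomplete : ∀ i, ∃ j, bp i j = true ∨ bn i j = true) (i : Fin k) :
    ∃ j', (bp i j' = true ∧ Lit.subst σ (s i) = m j') ∨
      (bn i j' = true ∧ Lit.subst σ (s i) = (m j').neg) := by
  obtain ⟨j', hb | hb⟩ := hcomplete i
  · obtain ⟨θ', hθ', hle'⟩ := hcp i j' hb
    exact ⟨j', .inl ⟨hb, hSp.subst_eq hθ' hle'⟩⟩
  · obtain ⟨θ', hθ', hle'⟩ := hcn i j' hb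
    exact ⟨j', .inr ⟨hb, hSn.subst_eq hθ' hle'⟩⟩

end Matchers

/-- Backward compatibility for subsumption resolution: under positive and negative
compatibility and SAT-based completeness, `Σ⁺ᵢⱼ ⊆ σ` implies `b⁺ᵢⱼ` and
`Σ⁻ᵢⱼ ⊆ σ` implies `b⁻ᵢⱼ`. -/
theorem stmt19 {V : Type} {k n : ℕ} (s : Fin k → Lit V) (m : Fin n → Lit V)
    (hM : NoDupAtomsIdx m)
    (Sp Sn : Fin k → Fin n → Option (PSub V))
    (hSp : IsMatcherFamilyPos s m Sp) (hSn : IsMatcherFamilyNeg s m Sn)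
    (σ : V → Trm V) (bp bn : Fin k → Fin n → Bool)
    (hcp : ∀ i j, bp i j = true → ∃ θ, Sp i j = some θ ∧ PSub.le θ σ)
    (hcn : ∀ i j, bn i j = true → ∃ θ, Sn i j = some θ ∧ PSub.le θ σ)
    (hcomplete : ∀ i, ∃ j, bp i j = true ∨ bn i j = true) :
    (∀ i j θ, Sp i j = some θ → PSub.le θ σ → bp i j = true) ∧
    (∀ i j θ, Sn i j = some θ → PSub.le θ σ → bn i j = true) := by
  obtain ⟨hdistinct, hnoncompl⟩ := hM
  have hselected := exists_selected_subst_eq hSp hSn hcp hcn hcomplete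
  constructor
  · intro i j θ hθ hle
    have hs := hSp.subst_eq hθ hle
    obtain ⟨j', ⟨hb, hs'⟩ | ⟨-, hs'⟩⟩ := hselected i
    · rwa [hdistinct j j' (hs.symm.trans hs')]
    · exact absurd (hs.symm.trans hs') (hnoncompl j j')
  · intro i j θ hθ hle
    have hs := hSn.subst_eq hθ hle
    obtain ⟨j', ⟨-, hs'⟩ | ⟨hb, hs'⟩⟩ := hselected i
    · exact absurd (hs'.symm.trans hs) (hnoncompl j' j)
    · rwa [hdistinct j j' (Lit.neg_injective (hs.symm.trans hs'))]
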